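/- arXiv:1705.05255 — 3 statements merged into one kernel-verified Lean document; each statement's English description precedes it below -/
import Mathlib

section
/- For any integer K ≥ 1, K + Σ_{j=2}^{K} C(K,j) · ∏_{t=2}^{j} (t-1)/(K-t+1) = K · Σ_{j=1}^{K} 1/j. -/
open Finset

theorem choose_mul_prod_Icc_eq_div {𝕜 : Type*} [Field 𝕜] [CharZero 𝕜] {K j : ℕ}
    (hj : 1 ≤ j) (hjK : j ≤ K) :
    (K.choose j : 𝕜) * ∏ t ∈ Icc 2 j, ((t : 𝕜) - 1) / ((K : 𝕜) - (t : 𝕜) + 1)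
      = (K : 𝕜) / (j : 𝕜) := by
  induction j, hj using Nat.le_induction with
  | base => simp
  | succ n hn ih =>
    -- The new factor n / (K - n) against C(K, n+1) / C(K, n) = (K - n) / (n + 1) turns K/n into K/(n+1).
    rw [prod_Icc_succ_top (by omega)]
    set P := ∏ t ∈ Icc 2 n, ((t : 𝕜) - 1) / ((K : 𝕜) - (t : 𝕜) + 1)
    have hKn : (K : 𝕜) - n ≠ 0 := sub_ne_zero.2 (by exact_mod_cast (by omega : K ≠ n))
    have hn0 : (n : 𝕜) ≠ 0 := by exact_mod_cast (by omega : n ≠ 0)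
    have hP : (K.choose n : 𝕜) * P * n = K := (eq_div_iff hn0).1 (ih (by omega))
    have hchoose : (K.choose (n + 1) : 𝕜) * (n + 1) = K.choose n * (K - n) := by
      rw [← Nat.cast_sub (by omega)]
      exact_mod_cast Nat.choose_succ_right_eq K n
    rw [show ((n + 1 : ℕ) : 𝕜) - 1 = n by push_cast; ring,
      show (K : 𝕜) - (n + 1 : ℕ) + 1 = K - n by push_cast; ring]
    push_cast
    field_simp
    linear_combination (P * n) * hchoose + (K - n : 𝕜) * hP

theorem stmt0_general (K : ℕ) :
    (K : ℝ) + ∑ j ∈ Finset.Icc 2 K, (K.choose j : ℝ) *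
        ∏ t ∈ Finset.Icc 2 j, ((t : ℝ) - 1) / ((K : ℝ) - (t : ℝ) + 1)
      = (K : ℝ) * ∑ j ∈ Finset.Icc 1 K, (1 : ℝ) / (j : ℝ) := by
  rcases Nat.eq_zero_or_pos K with rfl | hK
  · simp
  rw [sum_congr rfl fun j hj ↦ choose_mul_prod_Icc_eq_div (by grind) (mem_Icc.1 hj).2,
    Icc_eq_cons_Ioc (show 1 ≤ K from hK), sum_cons, ← Icc_add_one_left_eq_Ioc, mul_add, mul_sum]
  simp [div_eq_mul_inv]

/-- For any integer `K ≥ 1`,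
`K + Σ_{j=2}^{K} C(K,j) · ∏_{t=2}^{j} (t-1)/(K-t+1) = K · Σ_{j=1}^{K} 1/j`. -/
theorem stmt0 (K : ℕ) (hK : 1 ≤ K) :
    (K : ℝ) + ∑ j ∈ Finset.Icc 2 K, (K.choose j : ℝ) *
        ∏ t ∈ Finset.Icc 2 j, ((t : ℝ) - 1) / ((K : ℝ) - (t : ℝ) + 1)
      = (K : ℝ) * ∑ j ∈ Finset.Icc 1 K, (1 : ℝ) / (j : ℝ) :=
  stmt0_general K
end

section
/- Fix K ≥ 1 and a function δ from subsets of {1,…,K} to reals with δ_A < 1 for all A. Suppose μ : (nonempty subsets of {1,…,K}) → ℝ satisfies, for every set J with min element k* and |J| ≥ 2: Σ_{I : k* ∈ I ⊆ J} μ_I = (1 - δ_{J̄ ∪ {k*}})^{-1} · Σ_{∅ ≠ U ⊆ J∖{k*}} (-1)^{|U|+1} (1 - δ_{J̄ ∪ {k*} ∪ U}) · Σ_{I : k* ∈ I ⊆ J∖U} μ_I, where J̄ = {1,…,K}∖J. If moreover δ depends only on set cardinality (symmetric case), then for every k and every W with k ∈ W ⊆ {k, k+1, …, K}: Σ_{I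 : k ∈ I ⊆ W} μ_I = (1 - δ_{{1,…,K}}) μ_{{k}} / (1 - δ_{({1,…,K}∖W) ∪ {k}}). -/
open Finset

/-!
Strong induction on `W`; for `W = {k}` both sides are `μ {k}`. Otherwise the recursion at
`J = W` (whose minimum is `k`) expresses the left side through the sums over `W \ U`. Since
`(W \ U)ᶜ ∪ {k} = Wᶜ ∪ {k} ∪ U`, the induction hypothesis turns every term
`(1 - δ (Wᶜ ∪ {k} ∪ U)) * ∑_{k ∈ I ⊆ W \ U} μ I` into the constant `(1 - δ univ) * μ {k}`,
and the signs `(-1) ^ (#U + 1)` over the nonempty `U ⊆ W.erase k` sum to `1`.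
-/

theorem Finset.sum_powerset_filter_nonempty_neg_one_pow_card_add_one {α R : Type*} [CommRing R]
    {s : Finset α} (hs : s.Nonempty) :
    ∑ U ∈ s.powerset.filter (·.Nonempty), (-1 : R) ^ (#U + 1) = 1 := by
  classical
  have hzero : ∑ U ∈ s.powerset, (-1 : R) ^ #U = 0 := by
    exact_mod_cast congrArg (Int.cast : ℤ → R) (sum_powerset_neg_one_pow_card_of_nonempty hs)
  rw [← sum_filter_add_sum_filter_not s.powerset (·.Nonempty)] at hzero
  simp only [not_nonempty_iff_eq_empty, filter_eq', empty_mem_powerset, if_true, sum_singleton,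
    card_empty, pow_zero] at hzero
  simp only [pow_succ, mul_neg_one, sum_neg_distrib]
  linear_combination -hzero

theorem Finset.compl_sdiff_union_singleton {α : Type*} [Fintype α] [DecidableEq α]
    (W U : Finset α) (k : α) : (W \ U)ᶜ ∪ {k} = Wᶜ ∪ {k} ∪ U := by
  rw [compl_sdiff, himp_eq, sup_eq_union, union_comm U, union_right_comm]

theorem Finset.filter_mem_powerset_singleton {α : Type*} [DecidableEq α] (k : α) :
    ({k} : Finset α).powerset.filter (k ∈ ·) = {{k}} := by
  grind

/-- Lemma 2 (recursion lemma): if `μ` satisfies the inclusion–exclusion recursion for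
every `J` with `|J| ≥ 2` (with `k* = min J`), and `δ` is symmetric (depends only on
cardinality) with `δ_A < 1`, then for every `k` and `W` with `k ∈ W ⊆ {k,…,K}`,
`Σ_{k∈I⊆W} μ_I = (1 - δ_{univ}) μ_{{k}} / (1 - δ_{W̄∪{k}})`. -/
theorem stmt7 (K : ℕ)
    (δ : Finset (Fin K) → ℝ) (hδ : ∀ A, δ A < 1)
    (μ : Finset (Fin K) → ℝ)
    (hrec : ∀ (J : Finset (Fin K)) (hJ : 2 ≤ J.card),
      ∑ I ∈ J.powerset.filter
          (fun I => J.min' (Finset.card_pos.mp (by omega)) ∈ I), μ I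
        = (1 - δ (Jᶜ ∪ {J.min' (Finset.card_pos.mp (by omega))}))⁻¹ *
          ∑ U ∈ (J.erase (J.min' (Finset.card_pos.mp (by omega)))).powerset.filter
              (fun U => U.Nonempty),
            (-1 : ℝ) ^ (U.card + 1) *
              (1 - δ (Jᶜ ∪ {J.min' (Finset.card_pos.mp (by omega))} ∪ U)) *
              ∑ I ∈ (J \ U).powerset.filter
                  (fun I => J.min' (Finset.card_pos.mp (by omega)) ∈ I), μ I) :
    ∀ (k : Fin K) (W : Finset (Fin K)), k ∈ W → (∀ i ∈ W, k ≤ i) →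
      ∑ I ∈ W.powerset.filter (fun I => k ∈ I), μ I
        = (1 - δ Finset.univ) * μ {k} / (1 - δ (Wᶜ ∪ {k})) := by
  have hne (A : Finset (Fin K)) : 1 - δ A ≠ 0 := (sub_pos.2 (hδ A)).ne'
  intro k W
  induction W using Finset.strongInduction with
  | _ W ih =>
  intro hkW hle
  rcases Nat.lt_or_ge #W 2 with hW | hW
  · obtain rfl : W = {k} := eq_singleton_iff_unique_mem.2
      ⟨hkW, fun x hx => card_le_one.1 (by omega) x hx k hkW⟩
    rw [filter_mem_powerset_singleton, sum_singleton, union_singleton, insert_compl_self,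
      mul_div_cancel_left₀ _ (hne _)]
  · have hmin : W.min' (card_pos.1 (by omega)) = k :=
      le_antisymm (min'_le W k hkW) (hle _ (min'_mem _ _))
    have hterm : ∀ U ∈ (W.erase k).powerset.filter (·.Nonempty),
        (-1 : ℝ) ^ (#U + 1) * (1 - δ (Wᶜ ∪ {k} ∪ U)) *
          ∑ I ∈ (W \ U).powerset.filter (k ∈ ·), μ I
          = (-1 : ℝ) ^ (#U + 1) * ((1 - δ univ) * μ {k}) := by
      intro U hU
      obtain ⟨hUsub, hUne⟩ := mem_filter.1 hU
      have hUW : U ⊆ W := (mem_powerset.1 hUsub).trans (erase_subset _ _)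
      have hkU : k ∉ U := fun h => notMem_erase k W (mem_powerset.1 hUsub h)
      rw [ih (W \ U) (sdiff_ssubset hUW hUne) (mem_sdiff.2 ⟨hkW, hkU⟩)
        (fun i hi => hle i (mem_sdiff.1 hi).1), ← compl_sdiff_union_singleton, mul_assoc,
        mul_div_cancel₀ _ (hne _)]
    have hnonempty : (W.erase k).Nonempty :=
      Nontrivial.erase_nonempty (one_lt_card_iff_nontrivial.1 hW)
    have hrecW := hrec W hW
    simp only [hmin] at hrecW
    rw [hrecW, sum_congr rfl hterm, ← sum_mul,
      sum_powerset_filter_nonempty_neg_one_pow_card_add_one hnonempty, one_mul, inv_mul_eq_div]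
end

section
/- Let K ≥ 2 and for t = 1,…,K define a_t(snr) = (K - t + 1)·log(snr) + O(1) and for 2 ≤ t ≤ K define Σ_{l≤t} b_{l,t}(snr) = (t-1)·log(snr) + O(1) as snr → ∞. Then lim_{snr→∞} [ (K + Σ_{j=2}^{K} C(K,j) ∏_{t=2}^{j} (Σ_{l≤t} b_{l,t})/a_t )^{-1} · a_1 ] / log(snr) = (Σ_{j=1}^{K} 1/j)^{-1}. -/
/-!
Every rate term is a multiple of `log snr` up to `O(1)`, so after dividing by `log snr` the
phase rates tend to `K - t + 1` and the ratios `B_t / a_t` tend to `(t - 1) / (K - t + 1)`.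
The product of these limiting ratios over `2 ≤ t ≤ j` telescopes,
via `C(K, j + 1) (j + 1) = C(K, j) (K - j)`, to `K / (j C(K, j))`; hence the bracket tends
to `K (1 + 1/2 + ⋯ + 1/K)` while `a_1 / log snr → K`, and the prelog is the inverse harmonic number.
-/

open Filter Topology Asymptotics Finset

theorem tendsto_div_log_of_abs_sub_mul_log_le {f : ℝ → ℝ} {c C : ℝ}
    (h : ∀ᶠ s in atTop, |f s - c * Real.log s| ≤ C) :
    Tendsto (fun s => f s / Real.log s) atTop (𝓝 c) := by
  have hbdd : (fun s => f s - c * Real.log s) =O[atTop] (fun _ => (1 : ℝ)) :=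
    IsBigO.of_bound C (h.mono fun s hs => by simpa using hs)
  have hsmall := (hbdd.trans_isLittleO Real.isLittleO_const_log_atTop).tendsto_div_nhds_zero
  refine (zero_add c ▸ hsmall.add_const c).congr' ?_
  filter_upwards [Real.tendsto_log_atTop.eventually_ne_atTop 0] with s hs
  field_simp
  ring

theorem Filter.Tendsto.div_of_div {α 𝕜 : Type*} [DivisionRing 𝕜] [TopologicalSpace 𝕜]
    [ContinuousInv₀ 𝕜] [ContinuousMul 𝕜] {l : Filter α} {f g h : α → 𝕜} {c d : 𝕜}
    (hf : Tendsto (fun x => f x / h x) l (𝓝 c)) (hg : Tendsto (fun x => g x / h x) l (𝓝 d))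
    (hd : d ≠ 0) (hh : ∀ᶠ x in l, h x ≠ 0) :
    Tendsto (fun x => f x / g x) l (𝓝 (c / d)) :=
  (hf.div hg hd).congr' (hh.mono fun _ hx => div_div_div_cancel_right₀ hx _ _)

theorem cast_choose_mul_prod_Icc_sub_one_div {K j : ℕ} (hj : 1 ≤ j) (hjK : j ≤ K) :
    (K.choose j : ℝ) * ∏ t ∈ Icc 2 j, ((t : ℝ) - 1) / (K - t + 1) = K / j := by
  induction j, hj using Nat.le_induction with
  | base => simp
  | succ j hj ih =>
    have hjK' : j < K := by omega
    have hKj : (K : ℝ) - j ≠ 0 := sub_ne_zero.mpr (by exact_mod_cast hjK'.ne')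
    have hrec : (K.choose (j + 1) : ℝ) = K.choose j * (K - j) / (j + 1) := by
      rw [eq_div_iff (by positivity), ← Nat.cast_sub hjK'.le]
      exact_mod_cast Nat.choose_succ_right_eq K j
    calc (K.choose (j + 1) : ℝ) * ∏ t ∈ Icc 2 (j + 1), ((t : ℝ) - 1) / (K - t + 1)
        = (K.choose j * ∏ t ∈ Icc 2 j, ((t : ℝ) - 1) / (K - t + 1)) * (j / (j + 1)) := by
          rw [prod_Icc_succ_top (by omega), hrec, Nat.cast_succ, add_sub_cancel_right,
            show (K : ℝ) - (j + 1) + 1 = K - j by ring]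
          field_simp
      _ = K / (j + 1 : ℕ) := by
          rw [ih hjK'.le]
          push_cast
          field_simp

theorem add_sum_cast_choose_mul_prod_eq (K : ℕ) :
    (K : ℝ) + ∑ j ∈ Icc 2 K, (K.choose j : ℝ) *
        ∏ t ∈ Icc 2 j, ((t : ℝ) - 1) / (K - t + 1) = K * ∑ j ∈ Icc 1 K, (1 : ℝ) / j := by
  obtain rfl | hK := eq_or_ne K 0
  · simp
  rw [mul_sum, ← insert_Icc_add_one_left_eq_Icc (Nat.one_le_iff_ne_zero.mpr hK),
    sum_insert (by simp)]
  congr 1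
  · simp
  · exact sum_congr rfl fun j hj => by
      rw [cast_choose_mul_prod_Icc_sub_one_div (by grind) (by grind), mul_one_div]

theorem stmt14_general (K : ℕ) (a B : ℕ → ℝ → ℝ)
    (ha : ∀ t ∈ Finset.Icc 1 K, ∃ C : ℝ, ∀ᶠ s in Filter.atTop,
      |a t s - ((K : ℝ) - (t : ℝ) + 1) * Real.log s| ≤ C)
    (hB : ∀ t ∈ Finset.Icc 2 K, ∃ C : ℝ, ∀ᶠ s in Filter.atTop,
      |B t s - ((t : ℝ) - 1) * Real.log s| ≤ C) :
    Filter.Tendsto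
      (fun s => ((K : ℝ) + ∑ j ∈ Finset.Icc 2 K, (K.choose j : ℝ) *
          ∏ t ∈ Finset.Icc 2 j, B t s / a t s)⁻¹ * a 1 s / Real.log s)
      Filter.atTop
      (nhds ((∑ j ∈ Finset.Icc 1 K, (1 : ℝ) / (j : ℝ))⁻¹)) := by
  -- for `K = 0` the rate and the limit are both `0⁻¹ = 0`
  obtain rfl | hK := eq_or_ne K 0
  · simp
  have haL : ∀ t ∈ Icc 1 K, Tendsto (fun s => a t s / Real.log s) atTop (𝓝 (K - t + 1)) :=
    fun t ht => (ha t ht).elim fun _ hC => tendsto_div_log_of_abs_sub_mul_log_le hC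
  have hratio : ∀ t ∈ Icc 2 K,
      Tendsto (fun s => B t s / a t s) atTop (𝓝 ((t - 1) / (K - t + 1))) := fun t ht =>
    (hB t ht).elim fun _ hC => (tendsto_div_log_of_abs_sub_mul_log_le hC).div_of_div
      (haL t (by grind)) (by rw [mem_Icc] at ht; rify at ht; linarith)
      (Real.tendsto_log_atTop.eventually_ne_atTop 0)
  have hbracket : Tendsto (fun s => (K : ℝ) + ∑ j ∈ Icc 2 K, (K.choose j : ℝ) *
      ∏ t ∈ Icc 2 j, B t s / a t s) atTop (𝓝 (K * ∑ j ∈ Icc 1 K, (1 : ℝ) / j)) := by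
    rw [← add_sum_cast_choose_mul_prod_eq]
    exact tendsto_const_nhds.add <| tendsto_finsetSum _ fun j hj =>
      (tendsto_finsetProd _ fun t ht => hratio t (by grind)).const_mul _
  have hH : 0 < ∑ j ∈ Icc 1 K, (1 : ℝ) / j :=
    sum_pos (fun j hj => one_div_pos.mpr (Nat.cast_pos.mpr (mem_Icc.mp hj).1)) ⟨1, by grind⟩
  convert (hbracket.inv₀ (by positivity)).mul (haL 1 (by grind)) using 2
  · simp only [mul_div_assoc]
  · rw [Nat.cast_one, sub_add_cancel, mul_inv_rev,
      inv_mul_cancel_right₀ (Nat.cast_ne_zero.mpr hK)]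

/-- High-SNR DoF of the JSC scheme: with `a_t(s) = (K-t+1)·log s + O(1)` and
`Σ_{l≤t} b_{l,t}(s) = (t-1)·log s + O(1)`, the symmetric rate
`(K + Σ_j C(K,j) ∏_t B_t/a_t)⁻¹ a_1` has prelog `(Σ_{j=1}^K 1/j)⁻¹`. -/
theorem stmt14 (K : ℕ) (hK : 2 ≤ K) (a B : ℕ → ℝ → ℝ)
    (ha : ∀ t ∈ Finset.Icc 1 K, ∃ C : ℝ, ∀ᶠ s in Filter.atTop,
      |a t s - ((K : ℝ) - (t : ℝ) + 1) * Real.log s| ≤ C)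
    (hB : ∀ t ∈ Finset.Icc 2 K, ∃ C : ℝ, ∀ᶠ s in Filter.atTop,
      |B t s - ((t : ℝ) - 1) * Real.log s| ≤ C) :
    Filter.Tendsto
      (fun s => ((K : ℝ) + ∑ j ∈ Finset.Icc 2 K, (K.choose j : ℝ) *
          ∏ t ∈ Finset.Icc 2 j, B t s / a t s)⁻¹ * a 1 s / Real.log s)
      Filter.atTop
      (nhds ((∑ j ∈ Finset.Icc 1 K, (1 : ℝ) / (j : ℝ))⁻¹)) :=
  stmt14_general K a B ha hB
end
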